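/- arXiv:2307.11822 — 3 statements merged into one kernel-verified Lean document; each statement's English description precedes it below -/
import Mathlib

section
/- Let A be an m×n real matrix such that S^+(Ax) ≤ S^-(x) for every nonzero vector x ∈ ℝ^n. Then every p×p minor of A is nonzero, for all 1 ≤ p ≤ min{m,n}. -/
open Matrix Filter

/-- Number of sign changes in a list of reals (consecutive pairs with negative product). -/
noncomputable def signChanges (l : List ℝ) : ℕ :=
  (l.zip l.tail).countP (fun p => decide (p.1 * p.2 < 0))

/-- `S^-(v)`: sign changes of the coordinates of `v` after discarding zero entries. -/
noncomputable def Sm {n : ℕ} (v : Fin n → ℝ) : ℕ :=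
  signChanges ((List.ofFn v).filter (fun x => decide (x ≠ 0)))

/-- `S^+(v)`: maximal number of sign changes over all ±1 completions of the zero
entries of `v`, with the convention `S^+(0) = n`. -/
noncomputable def Sp {n : ℕ} (v : Fin n → ℝ) : ℕ :=
  if v = 0 then n
  else Finset.univ.sup (fun σ : Fin n → Bool =>
    signChanges (List.ofFn (fun i => if v i = 0 then (if σ i then (1:ℝ) else -1) else v i)))

/-- First nonzero entry of a vector (`0` if the vector is zero). -/
noncomputable def firstNz {n : ℕ} (v : Fin n → ℝ) : ℝ :=
  ((List.ofFn v).filter (fun x => decide (x ≠ 0))).headI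

/-- `A` is strictly sign regular with sign pattern `ε`:
every `r × r` minor (`1 ≤ r ≤ min m n`) is nonzero with sign `ε r`. -/
def ssrPattern {m n : ℕ} (A : Matrix (Fin m) (Fin n) ℝ) (ε : ℕ → ℝ) : Prop :=
  ∀ r : ℕ, 1 ≤ r → r ≤ min m n → ∀ (f : Fin r → Fin m) (g : Fin r → Fin n),
    StrictMono f → StrictMono g → 0 < ε r * (A.submatrix f g).det

/-- `A` is sign regular with sign pattern `ε`:
every nonzero `r × r` minor (`1 ≤ r ≤ min m n`) has sign `ε r`. -/
def srPattern {m n : ℕ} (A : Matrix (Fin m) (Fin n) ℝ) (ε : ℕ → ℝ) : Prop :=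
  ∀ r : ℕ, 1 ≤ r → r ≤ min m n → ∀ (f : Fin r → Fin m) (g : Fin r → Fin n),
    StrictMono f → StrictMono g → 0 ≤ ε r * (A.submatrix f g).det

/-- The map `f` picks out consecutive indices. -/
def Contig {r m : ℕ} (f : Fin r → Fin m) : Prop :=
  ∃ a : ℕ, ∀ i : Fin r, (f i : ℕ) = a + (i : ℕ)

/-! If the minor `det A[f, g]` vanished, a kernel vector `c ≠ 0` of `A[f, g]`, extended by zero
along `g`, would give `x ≠ 0` with at most `p` nonzero entries, so `S⁻(x) ≤ p - 1`, while `A x`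
vanishes at the `p` rows `f`. A vector with `k` zero entries has `S⁺ ≥ k`: fill each zero with the
sign opposite to its neighbour on the side of the first nonzero entry, so that every zero accounts
for its own sign change (for the zero vector, `S⁺` is its length by convention). Hence
`p ≤ S⁺(A x) ≤ S⁻(x) ≤ p - 1`. -/

open Function Finset

theorem List.countP_ofFn {α : Type*} {n : ℕ} (v : Fin n → α) (P : α → Prop) [DecidablePred P] :
    (List.ofFn v).countP (fun a => decide (P a)) = #{i | P (v i)} := by
  rw [← Multiset.coe_countP, ← Fin.univ_val_map, Multiset.countP_map, Finset.card,
    Finset.filter_val]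

theorem Matrix.mulVec_extend_zero {m n p R : Type*} [Fintype n] [Fintype p]
    [NonUnitalNonAssocSemiring R]
    (A : Matrix m n R) {g : p → n} (hg : Injective g) (c : p → R) :
    A *ᵥ extend g c 0 = A.submatrix id g *ᵥ c := by
  ext i
  refine (Fintype.sum_of_injective g hg _ _ (fun j hj => ?_) (fun k => ?_)).symm
  · simp [extend_apply' c (0 : n → R) j hj]
  · simp [hg.extend_apply]

theorem card_filter_extend_zero_ne_zero_le {ι κ R : Type*} [Fintype ι] [Fintype κ]
    [DecidableEq κ] [Zero R] [DecidableEq R] (g : ι → κ) (c : ι → R) :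
    #{j | extend g c 0 j ≠ 0} ≤ Fintype.card ι :=
  calc #{j | extend g c 0 j ≠ 0} ≤ #(univ.image g) := card_le_card fun j hj => by
        obtain ⟨i, -, rfl⟩ := support_extend_zero_subset (mem_filter.mp hj).2
        exact mem_image_of_mem g (mem_univ i)
    _ ≤ Fintype.card ι := card_image_le

theorem signChanges_cons_cons (a b : ℝ) (l : List ℝ) :
    signChanges (a :: b :: l) = signChanges (b :: l) + if a * b < 0 then 1 else 0 := by
  simp [signChanges, List.countP_cons]

theorem signChanges_le_signChanges_cons (a : ℝ) (l : List ℝ) :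
    signChanges l ≤ signChanges (a :: l) := by
  cases l with
  | nil => simp [signChanges]
  | cons b l => rw [signChanges_cons_cons]; omega

theorem signChanges_le_length_sub_one (l : List ℝ) : signChanges l ≤ l.length - 1 :=
  calc signChanges l ≤ (l.zip l.tail).length := List.countP_le_length
    _ = l.length - 1 := by simp

theorem Sm_le_card_filter_ne_zero_sub_one {n : ℕ} (v : Fin n → ℝ) :
    Sm v ≤ #{i | v i ≠ 0} - 1 := by
  have hlen := List.countP_ofFn v (· ≠ 0)
  rw [List.countP_eq_length_filter] at hlen
  exact hlen ▸ signChanges_le_length_sub_one _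

/-- The entry that the completion `σ` in the definition of `Sp` puts in place of `a`. -/
noncomputable def signFill (a : ℝ) (b : Bool) : ℝ := if a = 0 then (if b then 1 else -1) else a

def IsSignFill (a c : ℝ) : Prop := ∃ b : Bool, c = signFill a b

theorem signFill_ne_zero (a : ℝ) (b : Bool) : signFill a b ≠ 0 := by
  unfold signFill; split_ifs <;> simp_all

theorem IsSignFill.ne_zero {a c : ℝ} (h : IsSignFill a c) : c ≠ 0 := by
  obtain ⟨b, rfl⟩ := h
  exact signFill_ne_zero a b

theorem isSignFill_self {a : ℝ} (ha : a ≠ 0) : IsSignFill a a :=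
  ⟨false, by simp [signFill, ha]⟩

theorem exists_isSignFill_zero_mul_neg {s : ℝ} (hs : s ≠ 0) : ∃ c, IsSignFill 0 c ∧ s * c < 0 := by
  refine ⟨signFill 0 (decide (s < 0)), ⟨_, rfl⟩, ?_⟩
  rcases hs.lt_or_gt with h | h <;> simp [signFill, h, h.not_gt]

/-- Each zero is filled with the sign opposite to its left neighbour (`s` for the first entry). -/
theorem exists_isSignFill_count_zero_le_signChanges_cons (l : List ℝ) {s : ℝ} (hs : s ≠ 0) :
    ∃ l', List.Forall₂ IsSignFill l l' ∧ l.count 0 ≤ signChanges (s :: l') := by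
  induction l generalizing s with
  | nil => exact ⟨[], .nil, by simp⟩
  | cons a l ih =>
    by_cases ha : a = 0
    · subst ha
      obtain ⟨c, hc, hsc⟩ := exists_isSignFill_zero_mul_neg hs
      obtain ⟨l', hl', hcount⟩ := ih hc.ne_zero
      refine ⟨c :: l', .cons hc hl', ?_⟩
      rw [signChanges_cons_cons, if_pos hsc, List.count_cons_self]
      omega
    · obtain ⟨l', hl', hcount⟩ := ih ha
      refine ⟨a :: l', .cons (isSignFill_self ha) hl', ?_⟩
      rw [List.count_cons_of_ne ha]
      exact hcount.trans (signChanges_le_signChanges_cons s _)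

/-- Leading zeros are filled from right to left, each opposite to its right neighbour. -/
theorem exists_isSignFill_count_zero_le_signChanges {l : List ℝ} (hl : ∃ a ∈ l, a ≠ 0) :
    ∃ l', List.Forall₂ IsSignFill l l' ∧ l.count 0 ≤ signChanges l' := by
  induction l with
  | nil => simp at hl
  | cons a l ih =>
    by_cases ha : a = 0
    · subst ha
      obtain ⟨l', hl', hcount⟩ := ih (by simpa using hl)
      cases hl' with
      | nil => simp at hl
      | cons hbd hl'' =>
        obtain ⟨c, hc, hdc⟩ := exists_isSignFill_zero_mul_neg hbd.ne_zero
        refine ⟨c :: _, .cons hc (.cons hbd hl''), ?_⟩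
        rw [signChanges_cons_cons, if_pos (by rwa [mul_comm]), List.count_cons_self]
        omega
    · obtain ⟨l', hl', hcount⟩ := exists_isSignFill_count_zero_le_signChanges_cons l ha
      exact ⟨a :: l', .cons (isSignFill_self ha) hl', by rwa [List.count_cons_of_ne ha]⟩

theorem signChanges_le_Sp {n : ℕ} {v : Fin n → ℝ} (hv : v ≠ 0) {l : List ℝ}
    (hl : List.Forall₂ IsSignFill (List.ofFn v) l) : signChanges l ≤ Sp v := by
  obtain ⟨hlen, hfill⟩ := List.forall₂_iff_get.mp hl
  rw [List.length_ofFn] at hlen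
  choose σ hσ using fun i : Fin n => hfill i (by simp) (hlen ▸ i.2)
  have hlσ : l = List.ofFn fun i => signFill (v i) (σ i) := by
    refine List.ext_getElem (by simp [hlen]) fun i _ hi => ?_
    simpa using hσ ⟨i, by simpa using hi⟩
  rw [Sp, if_neg hv, hlσ]
  exact le_sup (f := fun σ => signChanges (List.ofFn fun i => signFill (v i) (σ i))) (mem_univ σ)

theorem card_filter_eq_zero_le_Sp {n : ℕ} (v : Fin n → ℝ) : #{i | v i = 0} ≤ Sp v := by
  by_cases hv : v = 0
  · rw [Sp, if_pos hv]
    exact (card_filter_le _ _).trans_eq (card_fin n)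
  · have hnz : ∃ a ∈ List.ofFn v, a ≠ 0 := by simpa [funext_iff] using hv
    obtain ⟨l, hl, hcount⟩ := exists_isSignFill_count_zero_le_signChanges hnz
    calc #{i | v i = 0} = (List.ofFn v).count 0 := by
          rw [List.count, ← List.countP_ofFn v (· = 0)]; rfl
      _ ≤ signChanges l := hcount
      _ ≤ Sp v := signChanges_le_Sp hv hl

theorem stmt0 {m n : ℕ} (A : Matrix (Fin m) (Fin n) ℝ)
    (hVD : ∀ x : Fin n → ℝ, x ≠ 0 → Sp (A *ᵥ x) ≤ Sm x) :
    ∀ p : ℕ, 1 ≤ p → p ≤ min m n →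
      ∀ (f : Fin p → Fin m) (g : Fin p → Fin n), StrictMono f → StrictMono g →
        (A.submatrix f g).det ≠ 0 := by
  intro p hp _ f g hf hg hdet
  obtain ⟨c, hc, hAc⟩ := Matrix.exists_mulVec_eq_zero_iff.mpr hdet
  set x := extend g c 0
  have hx : x ≠ 0 := fun h => hc <| funext fun i => by
    rw [← hg.injective.extend_apply c 0 i]
    exact congrFun h (g i)
  have hzeros : p ≤ #{i | (A *ᵥ x) i = 0} := by
    have hAx (i : Fin p) : (A *ᵥ x) (f i) = 0 := by
      rw [Matrix.mulVec_extend_zero A hg.injective c]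
      exact congrFun hAc i
    calc p = #(univ : Finset (Fin p)) := (card_fin p).symm
      _ ≤ #{i | (A *ᵥ x) i = 0} :=
        card_le_card_of_injOn f (fun i _ => by simp [hAx i]) hf.injective.injOn
  have hSp : p ≤ Sp (A *ᵥ x) := hzeros.trans (card_filter_eq_zero_le_Sp _)
  have hSm : Sm x ≤ p - 1 := (Sm_le_card_filter_ne_zero_sub_one x).trans <|
    Nat.sub_le_sub_right (by simpa using card_filter_extend_zero_ne_zero_le g c) 1
  have := hVD x hx
  omega
end

section
/- (Karlin/Fekete criterion) Let 1 ≤ k ≤ m, n and let A be an m×n real matrix. Then A is SSR_k (for each 1 ≤ r ≤ k all r×r minors of A are nonzero and share a common sign ε_r) if and only if for each 1 ≤ r ≤ k all contiguous r×r minors of A (those with consecutive row indices and consecutive column indices) are nonzero and share a common sign. -/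
open Matrix Filter

/-!
Signs propagate from contiguous minors by induction on the order `r`. Suppose every minor of
order `r - 1` has sign `ε`, and let `D` be a minor of order `r` whose row indices
`i₁ < ⋯ < i_r` leave a gap. Inserting a missing index into the gap gives `r + 1` rows, and the
three-term Plücker relation among them reads `N₁ D₀ - N₂ D + N₃ D' = 0`, where `N₁, N₂, N₃` are
minors of order `r - 1` and `D₀, D'` are the minors of order `r` obtained by dropping the first,
resp. the last, of the `r + 1` rows. Both have smaller row spread `i_r - i₁`, so induction on the
spread makes every row set contiguous; transposing does the same for the columns.
-/

theorem Contig.strictMono {r m : ℕ} {f : Fin r → Fin m} (hf : Contig f) : StrictMono f := by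
  obtain ⟨a, ha⟩ := hf
  intro i j hij
  rw [Fin.lt_def, ha i, ha j]
  exact Nat.add_lt_add_left hij a

theorem contig_fin_one {m : ℕ} (f : Fin 1 → Fin m) : Contig f :=
  ⟨f 0, fun i => by rw [Subsingleton.elim i 0]; rfl⟩

theorem exists_gap_of_not_contig {s m : ℕ} {f : Fin (s + 2) → Fin m} (hf : StrictMono f)
    (hc : ¬ Contig f) : ∃ t : Fin (s + 1), (f t.castSucc : ℕ) + 1 < f t.succ := by
  by_contra! hgap
  refine hc ⟨f 0, fun i => ?_⟩
  induction i using Fin.induction with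
  | zero => rfl
  | succ t ih =>
    have hlt : (f t.castSucc : ℕ) < f t.succ := hf t.castSucc_lt_succ
    have hle := hgap t
    rw [Fin.val_castSucc] at ih
    rw [Fin.val_succ]
    omega

def spread {r m : ℕ} (f : Fin (r + 1) → Fin m) : ℕ := f (Fin.last r) - f 0

theorem exists_insertNth_of_not_contig {s m : ℕ} {f : Fin (s + 2) → Fin m} (hf : StrictMono f)
    (hc : ¬ Contig f) :
    ∃ (β : Fin (s + 3) → Fin m) (t : Fin (s + 1)), StrictMono β ∧
      β ∘ t.castSucc.succ.succAbove = f ∧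
      spread (β ∘ Fin.succ) < spread f ∧ spread (β ∘ Fin.castSucc) < spread f := by
  obtain ⟨t, ht⟩ := exists_gap_of_not_contig hf hc
  let q : Fin m := ⟨f t.castSucc + 1, by omega⟩
  have hβ := Fin.strictMono_insertNth hf t q (Fin.lt_def.2 (Nat.lt_succ_self _)) (Fin.lt_def.2 ht)
  set β := Fin.insertNth (α := fun _ => Fin m) t.castSucc.succ q f
  have hβf : β ∘ t.castSucc.succ.succAbove = f := Fin.insertNth_comp_succAbove _ _ _
  have h0 : (β (0 : Fin (s + 2)).castSucc : ℕ) = f 0 := by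
    rw [← Fin.succAbove_of_castSucc_lt t.castSucc.succ 0 (by simp [Fin.lt_def]), ← hβf]; rfl
  have hlast : (β (Fin.last (s + 1)).succ : ℕ) = f (Fin.last (s + 1)) := by
    rw [← Fin.succAbove_of_le_castSucc t.castSucc.succ (Fin.last (s + 1))
      (by simp [Fin.le_def]; omega), ← hβf]; rfl
  have h01 : (β (0 : Fin (s + 2)).castSucc : ℕ) < β (0 : Fin (s + 2)).succ :=
    hβ Fin.castSucc_lt_succ
  have hpen : (β (Fin.last (s + 1)).castSucc : ℕ) < β (Fin.last (s + 1)).succ :=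
    hβ Fin.castSucc_lt_succ
  have hf0 : (f 0 : ℕ) < f (Fin.last (s + 1)) := hf Fin.last_pos
  refine ⟨β, t, hβ, hβf, ?_, ?_⟩
  · show (β (Fin.last (s + 1)).succ : ℕ) - β (0 : Fin (s + 2)).succ < f (Fin.last (s + 1)) - f 0
    omega
  · show (β (Fin.last (s + 1)).castSucc : ℕ) - β (0 : Fin (s + 2)).castSucc
      < f (Fin.last (s + 1)) - f 0
    omega

section Determinant

variable {R : Type*} [CommRing R]

theorem sum_det_submatrix_succAbove_smul_eq_zero {r : ℕ} (M : Matrix (Fin (r + 1)) (Fin r) R) :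
    ∑ l : Fin (r + 1), ((-1) ^ (l : ℕ) * (M.submatrix l.succAbove id).det) • M l = 0 := by
  ext j
  have h := det_succ_column_zero (of fun i => Fin.cons (M i j) (M i) : Matrix _ _ R)
  rw [det_zero_of_column_eq (Fin.succ_ne_zero j).symm (fun _ => rfl)] at h
  have hminor : ∀ l : Fin (r + 1), (of fun i => Fin.cons (M i j) (M i) : Matrix _ _ R).submatrix
      l.succAbove Fin.succ = M.submatrix l.succAbove id := fun _ => rfl
  simpa [Finset.sum_apply, hminor, mul_comm, mul_left_comm, mul_assoc] using h.symm

theorem det_submatrix_cons_succAbove {s : ℕ} (M : Matrix (Fin (s + 1)) (Fin (s + 1)) R)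
    (j : Fin (s + 1)) :
    (M.submatrix (Fin.cons j j.succAbove) id).det = (-1) ^ (j : ℕ) * M.det := by
  have : (Fin.cons j j.succAbove : Fin (s + 1) → Fin (s + 1)) = j.cycleRange.symm := by
    funext i
    cases i using Fin.cases <;> simp [Fin.cycleRange_symm_succ]
  rw [this, det_permute, Equiv.Perm.sign_symm, Fin.sign_cycleRange]
  push_cast
  rfl

theorem sum_det_submatrix_succAbove_mul_det_cons_eq_zero {r q : ℕ}
    (M : Matrix (Fin (r + 1)) (Fin r) R) (S : Fin (q + 1) → Fin r) (w : Fin q → Fin (q + 1) → R) :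
    ∑ l : Fin (r + 1), (-1) ^ (l : ℕ) * (M.submatrix l.succAbove id).det *
      (of (Fin.cons (M l ∘ S) w)).det = 0 := by
  let φ : (Fin r → R) →ₗ[R] R :=
    ((detRowAlternating : (Fin (q + 1) → R) [⋀^Fin (q + 1)]→ₗ[R] R).toMultilinearMap.toLinearMap
      (Fin.cons 0 w) 0).comp (LinearMap.funLeft R R S)
  have hφ : ∀ x, φ x = (of (Fin.cons (x ∘ S) w)).det := fun x => by
    simp only [φ, LinearMap.coe_comp, Function.comp_apply, AlternatingMap.coe_multilinearMap,
      MultilinearMap.toLinearMap_apply, Fin.update_cons_zero]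
    rfl
  have h := congrArg φ (sum_det_submatrix_succAbove_smul_eq_zero M)
  simp only [map_sum, map_smul, map_zero, smul_eq_mul] at h
  simpa only [hφ] using h

-- Rows `0`, `j + 1` and `s + 2` of `M` are the first, the inserted and the last row; each
-- `(s + 1)`-minor takes one of them, all remaining rows, and the first `s + 1` columns.
theorem three_term_plucker {s : ℕ} (M : Matrix (Fin (s + 3)) (Fin (s + 2)) R) (j : Fin (s + 1)) :
    (M.submatrix (Fin.castSucc ∘ j.succ.succAbove) Fin.castSucc).det *
        (M.submatrix Fin.succ id).det
      - (M.submatrix (Fin.succ ∘ Fin.castSucc) Fin.castSucc).det *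
        (M.submatrix j.castSucc.succ.succAbove id).det
      + (M.submatrix (Fin.succ ∘ j.castSucc.succAbove) Fin.castSucc).det *
        (M.submatrix Fin.castSucc id).det = 0 := by
  set w : Fin s → Fin (s + 1) → R := fun t => M (j.succAbove t).castSucc.succ ∘ Fin.castSucc
  have h := sum_det_submatrix_succAbove_mul_det_cons_eq_zero M Fin.castSucc w
  rw [Fin.sum_univ_succ, Fin.sum_univ_castSucc, Finset.sum_eq_single j] at h
  · have e0 : of (Fin.cons (M 0 ∘ Fin.castSucc) w) =
        M.submatrix (Fin.castSucc ∘ j.succ.succAbove) Fin.castSucc := by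
      ext i c
      cases i using Fin.cases <;> simp [w]
    have emid : of (Fin.cons (M j.castSucc.succ ∘ Fin.castSucc) w) =
        (M.submatrix (Fin.succ ∘ Fin.castSucc) Fin.castSucc).submatrix
          (Fin.cons j j.succAbove) id := by
      ext i c
      cases i using Fin.cases <;> rfl
    have elast : of (Fin.cons (M (Fin.last (s + 1)).succ ∘ Fin.castSucc) w) =
        (M.submatrix (Fin.succ ∘ j.castSucc.succAbove) Fin.castSucc).submatrix
          (Fin.cons (Fin.last s) (Fin.last s).succAbove) id := by
      ext i c
      cases i using Fin.cases with
      | zero => simp [Fin.succAbove_ne_last_last (Fin.castSucc_lt_last j).ne]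
      | succ t => simp [w, Fin.castSucc_succAbove_castSucc]
    rw [e0, emid, elast, det_submatrix_cons_succAbove, det_submatrix_cons_succAbove] at h
    have hsq : ∀ k : ℕ, ((-1 : R) ^ k) ^ 2 = 1 := fun k => by
      rw [← pow_mul, pow_mul', neg_one_sq, one_pow]
    simp only [Fin.val_zero, pow_zero, one_mul, Fin.succAbove_zero, Fin.val_succ, Fin.val_castSucc,
      Fin.val_last, Fin.succAbove_last, Fin.succ_last, Nat.succ_eq_add_one] at h
    linear_combination h
      + (M.submatrix (Fin.succ ∘ Fin.castSucc) Fin.castSucc).det *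
        (M.submatrix j.castSucc.succ.succAbove id).det * hsq j
      - (M.submatrix (Fin.succ ∘ j.castSucc.succAbove) Fin.castSucc).det *
        (M.submatrix Fin.castSucc id).det * hsq s
  · intro t _ htj
    obtain ⟨t', rfl⟩ := Fin.exists_succAbove_eq htj
    rw [det_zero_of_row_eq (M := of (Fin.cons (M _ ∘ Fin.castSucc) w))
      (Fin.succ_ne_zero t').symm rfl, mul_zero]
  · simp

end Determinant

theorem pos_mul_of_three_term {R : Type*} [CommRing R] [LinearOrder R] [IsStrictOrderedRing R]
    {ε δ a b c x y z : R} (h : a * x - b * y + c * z = 0)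
    (ha : 0 < ε * a) (hb : 0 < ε * b) (hc : 0 < ε * c) (hx : 0 < δ * x) (hz : 0 < δ * z) :
    0 < δ * y := by
  have hprod : (ε * b) * (δ * y) = (ε * a) * (δ * x) + (ε * c) * (δ * z) := by
    linear_combination (-(ε * δ)) * h
  exact pos_of_mul_pos_right (hprod ▸ add_pos (mul_pos ha hx) (mul_pos hc hz)) hb.le

section SignRegular

variable {m n : ℕ} {A : Matrix (Fin m) (Fin n) ℝ}

theorem pos_mul_det_of_contig_rows {s : ℕ} {ε δ : ℝ}
    (hsmall : ∀ (f : Fin (s + 1) → Fin m) (g : Fin (s + 1) → Fin n), StrictMono f → StrictMono g →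
      0 < ε * (A.submatrix f g).det)
    {g : Fin (s + 2) → Fin n} (hg : StrictMono g)
    (hcontig : ∀ f : Fin (s + 2) → Fin m, Contig f → 0 < δ * (A.submatrix f g).det)
    {f : Fin (s + 2) → Fin m} (hf : StrictMono f) : 0 < δ * (A.submatrix f g).det := by
  induction hd : spread f using Nat.strong_induction_on generalizing f with
  | _ d ih =>
    by_cases hfc : Contig f
    · exact hcontig f hfc
    obtain ⟨β, t, hβ, hβf, hsucc, hcast⟩ := exists_insertNth_of_not_contig hf hfc
    have key := three_term_plucker (A.submatrix β g) t
    simp only [submatrix_submatrix, Function.comp_id, hβf] at key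
    have hgc := hg.comp Fin.strictMono_castSucc
    exact pos_mul_of_three_term key
      (hsmall _ _ (hβ.comp (Fin.strictMono_castSucc.comp (Fin.strictMono_succAbove _))) hgc)
      (hsmall _ _ (hβ.comp (Fin.strictMono_succ.comp Fin.strictMono_castSucc)) hgc)
      (hsmall _ _ (hβ.comp (Fin.strictMono_succ.comp (Fin.strictMono_succAbove _))) hgc)
      (ih _ (hd ▸ hsucc) (hβ.comp Fin.strictMono_succ) rfl)
      (ih _ (hd ▸ hcast) (hβ.comp Fin.strictMono_castSucc) rfl)

theorem det_transpose_submatrix {r : ℕ} (f : Fin r → Fin m) (g : Fin r → Fin n) :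
    (Aᵀ.submatrix g f).det = (A.submatrix f g).det := by
  rw [← transpose_submatrix, det_transpose]

theorem pos_mul_det_of_contig {s : ℕ} {ε δ : ℝ}
    (hsmall : ∀ (f : Fin (s + 1) → Fin m) (g : Fin (s + 1) → Fin n), StrictMono f → StrictMono g →
      0 < ε * (A.submatrix f g).det)
    (hcontig : ∀ (f : Fin (s + 2) → Fin m) (g : Fin (s + 2) → Fin n), Contig f → Contig g →
      0 < δ * (A.submatrix f g).det)
    {f : Fin (s + 2) → Fin m} {g : Fin (s + 2) → Fin n} (hf : StrictMono f) (hg : StrictMono g) :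
    0 < δ * (A.submatrix f g).det := by
  have hrows : ∀ f : Fin (s + 2) → Fin m, Contig f → 0 < δ * (A.submatrix f g).det := by
    intro f hfc
    rw [← det_transpose_submatrix]
    refine pos_mul_det_of_contig_rows (ε := ε) (fun g' f' hg' hf' => ?_) hfc.strictMono
      (fun g' hg' => ?_) hg
    · rw [det_transpose_submatrix]; exact hsmall f' g' hf' hg'
    · rw [det_transpose_submatrix]; exact hcontig f g' hfc hg'
  exact pos_mul_det_of_contig_rows hsmall hg hrows hf

theorem pos_mul_det_of_forall_contig {r : ℕ} (hr : 1 ≤ r)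
    (hlower : ∀ q, 1 ≤ q → q < r → ∃ ε : ℝ, ∀ (f : Fin q → Fin m) (g : Fin q → Fin n),
      Contig f → Contig g → 0 < ε * (A.submatrix f g).det)
    {δ : ℝ} (hδ : ∀ (f : Fin r → Fin m) (g : Fin r → Fin n), Contig f → Contig g →
      0 < δ * (A.submatrix f g).det) :
    ∀ (f : Fin r → Fin m) (g : Fin r → Fin n), StrictMono f → StrictMono g →
      0 < δ * (A.submatrix f g).det := by
  induction r, hr using Nat.le_induction generalizing δ with
  | base => exact fun f g _ _ => hδ f g (contig_fin_one f) (contig_fin_one g)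
  | succ r hr ih =>
    obtain ⟨s, rfl⟩ : ∃ s, r = s + 1 := ⟨r - 1, by omega⟩
    obtain ⟨ε, hε⟩ := hlower (s + 1) hr (by omega)
    have hsmall := ih (fun q hq hqr => hlower q hq (by omega)) hε
    exact fun f g hf hg => pos_mul_det_of_contig hsmall hδ hf hg

end SignRegular

theorem stmt6_general {m n k : ℕ} (A : Matrix (Fin m) (Fin n) ℝ) :
    (∀ r : ℕ, 1 ≤ r → r ≤ k → ∃ s : ℝ, (s = 1 ∨ s = -1) ∧
        ∀ (f : Fin r → Fin m) (g : Fin r → Fin n), StrictMono f → StrictMono g →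
          0 < s * (A.submatrix f g).det) ↔
      (∀ r : ℕ, 1 ≤ r → r ≤ k → ∃ s : ℝ, (s = 1 ∨ s = -1) ∧
        ∀ (f : Fin r → Fin m) (g : Fin r → Fin n), Contig f → Contig g →
          0 < s * (A.submatrix f g).det) := by
  constructor
  · rintro H r hr hrk
    obtain ⟨s, hs, hpos⟩ := H r hr hrk
    exact ⟨s, hs, fun f g hf hg => hpos f g hf.strictMono hg.strictMono⟩
  · rintro H r hr hrk
    obtain ⟨s, hs, hpos⟩ := H r hr hrk
    refine ⟨s, hs, pos_mul_det_of_forall_contig hr (fun q hq hqr => ?_) hpos⟩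
    obtain ⟨ε, -, hε⟩ := H q hq (by omega)
    exact ⟨ε, hε⟩

theorem stmt6 {m n k : ℕ} (hk : 1 ≤ k) (hkm : k ≤ m) (hkn : k ≤ n)
    (A : Matrix (Fin m) (Fin n) ℝ) :
    (∀ r : ℕ, 1 ≤ r → r ≤ k → ∃ s : ℝ, (s = 1 ∨ s = -1) ∧
        ∀ (f : Fin r → Fin m) (g : Fin r → Fin n), StrictMono f → StrictMono g →
          0 < s * (A.submatrix f g).det) ↔
      (∀ r : ℕ, 1 ≤ r → r ≤ k → ∃ s : ℝ, (s = 1 ∨ s = -1) ∧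
        ∀ (f : Fin r → Fin m) (g : Fin r → Fin n), Contig f → Contig g →
          0 < s * (A.submatrix f g).det) :=
  stmt6_general A
end

section
/- Let A be an n×n matrix that is SSR_{n−1} with sign pattern (ε_1,…,ε_{n−1}), and let v = (α_1, −α_2, …, (−1)^{n−1} α_n)^T with all α_j ≥ 0 and v ≠ 0. If x := adj(A)·v, then all coordinates of x are nonzero and their signs strictly alternate, so S^-(x) = n − 1. -/
open Matrix Filter

lemma sm_of_alt {n : ℕ} (x : Fin n → ℝ) (h0 : ∀ i, x i ≠ 0)
    (halt : ∀ i j : Fin n, (j : ℕ) = (i : ℕ) + 1 → x i * x j < 0) :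
    Sm x = n - 1 := by
  have hfil : (List.ofFn x).filter (fun y => decide (y ≠ 0)) = List.ofFn x := by
    apply List.filter_eq_self.mpr
    intro a ha
    rw [List.mem_ofFn] at ha
    obtain ⟨i, rfl⟩ := ha
    simpa using h0 i
  rw [Sm, hfil, signChanges]
  set l := List.ofFn x with hl
  have hlen : l.length = n := by simp [hl]
  have hall : ∀ p ∈ l.zip l.tail, (fun p : ℝ × ℝ => decide (p.1 * p.2 < 0)) p = true := by
    intro p hp
    rw [List.mem_iff_getElem] at hp
    obtain ⟨k, hk, hpk⟩ := hp
    rw [List.length_zip, List.length_tail, hlen] at hk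
    have hk1 : k < l.length := by rw [hlen]; omega
    have hk1' : k + 1 < l.length := by rw [hlen]; omega
    have hk2 : k < l.tail.length := by rw [List.length_tail, hlen]; omega
    rw [List.getElem_zip, List.getElem_tail] at hpk
    have hkn : k + 1 < n := by omega
    subst hpk
    simp only [hl, List.getElem_ofFn]
    simp only [decide_eq_true_eq]
    exact halt ⟨k, by omega⟩ ⟨k + 1, hkn⟩ rfl
  rw [List.countP_eq_length.mpr hall, List.length_zip]
  simp [hlen]

theorem stmt8 {n : ℕ} (hn : 1 ≤ n) (A : Matrix (Fin n) (Fin n) ℝ) (ε : ℕ → ℝ)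
    (hsv : ∀ p, ε p = 1 ∨ ε p = -1)
    (hA : ∀ p : ℕ, 1 ≤ p → p ≤ n - 1 → ∀ (f g : Fin p → Fin n),
      StrictMono f → StrictMono g → 0 < ε p * (A.submatrix f g).det)
    (α : Fin n → ℝ) (hα : ∀ j, 0 ≤ α j)
    (v : Fin n → ℝ) (hv : ∀ j, v j = (-1 : ℝ) ^ (j : ℕ) * α j) (hv0 : v ≠ 0)
    (x : Fin n → ℝ) (hx : x = A.adjugate *ᵥ v) :
    (∀ i, x i ≠ 0) ∧
      (∀ i j : Fin n, (j : ℕ) = (i : ℕ) + 1 → x i * x j < 0) ∧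
      Sm x = n - 1 := by
  obtain ⟨m, rfl⟩ : ∃ m, n = m + 1 := ⟨n - 1, by omega⟩
  -- find a positive α
  obtain ⟨j0, hj0⟩ : ∃ j, v j ≠ 0 := Function.ne_iff.mp hv0
  have hα0 : 0 < α j0 := by
    rcases (hα j0).lt_or_eq with h | h
    · exact h
    · exfalso; apply hj0; rw [hv, ← h, mul_zero]
  rcases Nat.eq_zero_or_pos m with hm | hm
  · -- n = 1
    subst hm
    have hx1 : x = v := by
      rw [hx, adjugate_fin_one, one_mulVec]
    have h0 : ∀ i, x i ≠ 0 := by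
      intro i; rw [hx1]
      have : i = j0 := Fin.ext (by omega); rw [this]; exact hj0
    refine ⟨h0, fun i j h => absurd j.isLt (by omega), sm_of_alt x h0 ?_⟩
    intro i j h; exact absurd j.isLt (by omega)
  · -- n = m + 1, m ≥ 1
    set c : Fin (m + 1) → ℝ :=
      fun i => ∑ j, α j * (A.submatrix j.succAbove i.succAbove).det with hc
    have hxc : ∀ i, x i = (-1 : ℝ) ^ (i : ℕ) * c i := by
      intro i
      rw [hx]
      simp only [mulVec, dotProduct, hc, Finset.mul_sum]
      apply Finset.sum_congr rfl
      intro j _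
      rw [adjugate_fin_succ_eq_det_submatrix, hv]
      have : ((-1 : ℝ) ^ ((j : ℕ) + (i : ℕ)) * ((-1 : ℝ) ^ (j : ℕ))) = (-1 : ℝ) ^ (i : ℕ) := by
        rw [← pow_add]
        rw [show (j : ℕ) + (i : ℕ) + (j : ℕ) = 2 * (j : ℕ) + (i : ℕ) by ring, pow_add,
          pow_mul, neg_one_sq, one_pow, one_mul]
      calc (-1 : ℝ) ^ ((j : ℕ) + (i : ℕ)) * (A.submatrix j.succAbove i.succAbove).det *
            ((-1 : ℝ) ^ (j : ℕ) * α j)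
          = ((-1 : ℝ) ^ ((j : ℕ) + (i : ℕ)) * (-1 : ℝ) ^ (j : ℕ)) *
            (α j * (A.submatrix j.succAbove i.succAbove).det) := by ring
        _ = (-1 : ℝ) ^ (i : ℕ) * (α j * (A.submatrix j.succAbove i.succAbove).det) := by
            rw [this]
    have hcpos : ∀ i, 0 < ε m * c i := by
      intro i
      rw [hc, Finset.mul_sum]
      apply Finset.sum_pos'
      · intro j _
        have := hA m hm (by omega) j.succAbove i.succAbove
          (Fin.strictMono_succAbove j) (Fin.strictMono_succAbove i)
        nlinarith [hα j]
      · refine ⟨j0, Finset.mem_univ _, ?_⟩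
        have := hA m hm (by omega) j0.succAbove i.succAbove
          (Fin.strictMono_succAbove j0) (Fin.strictMono_succAbove i)
        nlinarith
    have hcne : ∀ i, c i ≠ 0 := by
      intro i h
      have := hcpos i
      rw [h, mul_zero] at this
      exact lt_irrefl _ this
    have h0 : ∀ i, x i ≠ 0 := by
      intro i
      rw [hxc]
      exact mul_ne_zero (by positivity) (hcne i)
    have halt : ∀ i j : Fin (m + 1), (j : ℕ) = (i : ℕ) + 1 → x i * x j < 0 := by
      intro i j hij
      rw [hxc, hxc, hij]
      have hcc : 0 < c i * c j := by
        have h1 := hcpos i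
        have h2 := hcpos j
        rcases hsv m with h | h <;> rw [h] at h1 h2 <;> nlinarith
      have hpow : ((-1 : ℝ)) ^ (i : ℕ) * (-1 : ℝ) ^ ((i : ℕ) + 1) = -1 := by
        rw [← pow_add, show (i : ℕ) + ((i : ℕ) + 1) = 2 * (i : ℕ) + 1 by ring,
          pow_succ, pow_mul, neg_one_sq, one_pow, one_mul]
      have : (-1 : ℝ) ^ (i : ℕ) * c i * ((-1 : ℝ) ^ ((i : ℕ) + 1) * c j)
          = ((-1 : ℝ) ^ (i : ℕ) * (-1 : ℝ) ^ ((i : ℕ) + 1)) * (c i * c j) := by ring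
      rw [this, hpow]
      linarith
    exact ⟨h0, halt, sm_of_alt x h0 halt⟩
end
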